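/- arXiv:1708.00431 — 4 statements merged into one kernel-verified Lean document; each statement's English description precedes it below -/
import Mathlib

section
/- Let C be a field and k_0, k_1, k_2, ... a sequence of elements of a field extension K of C. Suppose s ≥ 1 is the smallest positive integer for which there exists ξ ∈ C^s with k_s + k_{s-1}ξ_1 + ... + k_0 ξ_s = 0 (in particular no such relation exists for any smaller index, and k_0 ≠ 0 is not required but the sets H_i for i < s are empty). Then the set H_s = {ξ ∈ C^s : k_s + k_{s-1}ξ_1 + ... + k_0 ξ_s = 0} contains exactly one element. -/
/-!
If `ξ ≠ η` both lie in `H_s`, their difference `δ` solves the homogeneous relation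
`∑ k_{s-1-i} δ_i = 0`. Dividing by the first nonzero entry `δ_j` and dropping the
leading zeros gives an element of `H_{s-1-j}`, contradicting the minimality of `s`.
-/

namespace BasicConstants

variable {K : Type*} [Field K]

def linearPart (k : ℕ → K) {n : ℕ} (ξ : Fin n → K) : K :=
  ∑ i : Fin n, k (n - 1 - i) * ξ i

/-- The set `H_n` of the paper. -/
def relationSet (C : Subfield K) (k : ℕ → K) (n : ℕ) : Set (Fin n → K) :=
  {ξ | (∀ i, ξ i ∈ C) ∧ k n + linearPart k ξ = 0}

theorem linearPart_succ (k : ℕ → K) {n : ℕ} (ξ : Fin (n + 1) → K) :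
    linearPart k ξ = k n * ξ 0 + linearPart k (Fin.tail ξ) := by
  simp only [linearPart, Fin.sum_univ_succ, Fin.val_zero, Fin.val_succ, Fin.tail]
  congr 2 with i
  congr 2
  omega

theorem linearPart_sub (k : ℕ → K) {n : ℕ} (ξ η : Fin n → K) :
    linearPart k (ξ - η) = linearPart k ξ - linearPart k η := by
  simp only [linearPart, Pi.sub_apply, mul_sub, Finset.sum_sub_distrib]

theorem linearPart_smul (k : ℕ → K) {n : ℕ} (c : K) (ξ : Fin n → K) :
    linearPart k (c • ξ) = c * linearPart k ξ := by
  simp only [linearPart, Pi.smul_apply, smul_eq_mul, Finset.mul_sum]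
  exact Finset.sum_congr rfl fun i _ => by ring

theorem exists_lt_relationSet_nonempty {C : Subfield K} {k : ℕ → K} :
    ∀ {n : ℕ} {δ : Fin n → K}, (∀ i, δ i ∈ C) → δ ≠ 0 → linearPart k δ = 0 →
      ∃ m < n, (relationSet C k m).Nonempty
  | 0, δ, _, hδ, _ => absurd (Subsingleton.elim δ 0) hδ
  | n + 1, δ, hC, hδ, h => by
    rw [linearPart_succ] at h
    by_cases h0 : δ 0 = 0
    · have htail : Fin.tail δ ≠ 0 := fun ht =>
        hδ <| funext fun i => Fin.cases h0 (fun j => congrFun ht j) i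
      rw [h0, mul_zero, zero_add] at h
      obtain ⟨m, hm, hne⟩ := exists_lt_relationSet_nonempty (fun i => hC i.succ) htail h
      exact ⟨m, hm.trans n.lt_succ_self, hne⟩
    · refine ⟨n, n.lt_succ_self, (δ 0)⁻¹ • Fin.tail δ,
        fun i => C.mul_mem (C.inv_mem (hC 0)) (hC i.succ), ?_⟩
      rw [linearPart_smul]
      field_simp
      linear_combination h

theorem relationSet_subsingleton {C : Subfield K} {k : ℕ → K} {n : ℕ}
    (h : ∀ m < n, relationSet C k m = ∅) : (relationSet C k n).Subsingleton := by
  intro ξ ⟨hξC, hξ⟩ η ⟨hηC, hη⟩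
  by_contra hne
  obtain ⟨m, hm, hnonempty⟩ := exists_lt_relationSet_nonempty (k := k) (δ := ξ - η)
    (fun i => C.sub_mem (hξC i) (hηC i)) (sub_ne_zero.2 hne)
    (by rw [linearPart_sub]; linear_combination hξ - hη)
  exact hnonempty.ne_empty (h m hm)

end BasicConstants

open BasicConstants in
theorem basic_constants_unique_general {K : Type*} [Field K] (C : Subfield K) (k : ℕ → K)
    (s : ℕ)
    (hempty : ∀ m, m < s →
      ¬∃ ξ : Fin m → K, (∀ i, ξ i ∈ C) ∧
        k m + ∑ i : Fin m, k (m - 1 - (i : ℕ)) * ξ i = 0)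
    (hne : ∃ ξ : Fin s → K, (∀ i, ξ i ∈ C) ∧
        k s + ∑ i : Fin s, k (s - 1 - (i : ℕ)) * ξ i = 0) :
    ∃! ξ : Fin s → K, (∀ i, ξ i ∈ C) ∧
        k s + ∑ i : Fin s, k (s - 1 - (i : ℕ)) * ξ i = 0 := by
  obtain ⟨ξ, hξ⟩ := hne
  have hsub : (relationSet C k s).Subsingleton := relationSet_subsingleton fun m hm =>
    Set.eq_empty_iff_forall_notMem.2 fun η hη => hempty m hm ⟨η, hη⟩
  exact ⟨ξ, hξ, fun η hη => hsub hη hξ⟩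

/-- let `C ⊆ K` be fields and `k₀, k₁, k₂, …` a sequence in `K`.
Define `H_n = {ξ ∈ Cⁿ : k_n + k_{n-1}ξ₁ + ⋯ + k₀ξ_n = 0}`.  If `s ≥ 1` is the
smallest index with `H_s ≠ ∅` (so `H_m = ∅` for every `m < s`, in particular
`k₀ ≠ 0` as `H_0 = ∅`), then `H_s` contains exactly one element. -/
theorem basic_constants_unique {K : Type*} [Field K] (C : Subfield K) (k : ℕ → K)
    (s : ℕ) (hs : 1 ≤ s)
    (hempty : ∀ m, m < s →
      ¬∃ ξ : Fin m → K, (∀ i, ξ i ∈ C) ∧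
        k m + ∑ i : Fin m, k (m - 1 - (i : ℕ)) * ξ i = 0)
    (hne : ∃ ξ : Fin s → K, (∀ i, ξ i ∈ C) ∧
        k s + ∑ i : Fin s, k (s - 1 - (i : ℕ)) * ξ i = 0) :
    ∃! ξ : Fin s → K, (∀ i, ξ i ∈ C) ∧
        k s + ∑ i : Fin s, k (s - 1 - (i : ℕ)) * ξ i = 0 :=
  basic_constants_unique_general C k s hempty hne
end

section
/- Let C ⊆ K be fields and k_0, k_1, k_2, ... elements of K satisfying the recursion k_n = -k_{n-1}c_1 - ... - k_{n-s}c_s for all n ≥ s, where (c_1,...,c_s) ∈ C^s is fixed. Assume that for every m < s there is no ξ ∈ C^m with k_m + k_{m-1}ξ_1 + ... + k_0 ξ_m = 0. Then for every n > s the C-vector space V_n = {ξ ∈ C^n : k_{n-1}ξ_1 + k_{n-2}ξ_2 + ... + k_0 ξ_n = 0} has dimension n - s. -/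
/-!
The map `ξ ↦ ∑ ξᵢ k_{n-1-i}` has image `span_C {k₀, …, k_{n-1}}`, so by rank–nullity it suffices
to show that this span has dimension `min n s`. The minimality hypothesis says exactly that each
`k_m` with `m < s` lies outside the span of its predecessors, so `k₀, …, k_{s-1}` are linearly
independent; the recursion puts every later `k_m` inside that span, so the spans stop growing at `s`.
-/

open Module Submodule Set

theorem Fin.fun_val_succ_eq_snoc {α : Type*} (f : ℕ → α) (n : ℕ) :
    (fun i : Fin (n + 1) => f i) = Fin.snoc (fun i : Fin n => f i) (f n) := by
  funext i
  refine Fin.lastCases ?_ (fun j => ?_) i <;> simp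

theorem Set.range_fin_rev_eq {α : Type*} (f : ℕ → α) (n : ℕ) :
    range (fun i : Fin n => f (n - 1 - i)) = range (fun i : Fin n => f i) := by
  have hrev : (fun i : Fin n => f (n - 1 - i)) = (fun i : Fin n => f i) ∘ Fin.rev := by
    funext i
    simp only [Function.comp_apply, Fin.val_rev]
    congr 1
    omega
  rw [hrev, Fin.rev_surjective.range_comp]

theorem Submodule.span_range_fin_eq_of_mem_span {R M : Type*} [Semiring R] [AddCommMonoid M]
    [Module R M] (f : ℕ → M) {s : ℕ}
    (hold : ∀ m, s ≤ m → f m ∈ span R (range fun i : Fin m => f i)) {n : ℕ} (hn : s ≤ n) :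
    span R (range fun i : Fin n => f i) = span R (range fun i : Fin s => f i) := by
  induction n, hn using Nat.le_induction with
  | base => rfl
  | succ m hm ih =>
    rw [Fin.fun_val_succ_eq_snoc, Fin.range_snoc, span_insert_eq_span (hold m hm), ih]

section DivisionRing

variable {R M : Type*} [DivisionRing R] [AddCommGroup M] [Module R M]

theorem linearIndependent_fin_of_notMem_span (f : ℕ → M) {s : ℕ}
    (hnew : ∀ m < s, f m ∉ span R (range fun i : Fin m => f i)) {t : ℕ} (ht : t ≤ s) :
    LinearIndependent R (fun i : Fin t => f i) := by
  induction t with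
  | zero => exact linearIndependent_empty_type
  | succ t ih =>
    rw [Fin.fun_val_succ_eq_snoc, linearIndependent_finSnoc]
    exact ⟨ih (by omega), hnew t (by omega)⟩

theorem finrank_span_range_fin_eq_min (f : ℕ → M) (s : ℕ)
    (hnew : ∀ m < s, f m ∉ span R (range fun i : Fin m => f i))
    (hold : ∀ m, s ≤ m → f m ∈ span R (range fun i : Fin m => f i)) (n : ℕ) :
    finrank R (span R (range fun i : Fin n => f i)) = min n s := by
  rcases le_total n s with hns | hsn
  · rw [finrank_span_eq_card (linearIndependent_fin_of_notMem_span f hnew hns),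
      Fintype.card_fin, min_eq_left hns]
  · rw [span_range_fin_eq_of_mem_span f hold hsn,
      finrank_span_eq_card (linearIndependent_fin_of_notMem_span f hnew le_rfl),
      Fintype.card_fin, min_eq_right hsn]

end DivisionRing

theorem Submodule.mem_span_range_iff_exists_add_sum_mul_eq_zero {R A ι : Type*} [CommRing R]
    [Ring A] [Algebra R A] [Fintype ι] (v : ι → A) (x : A) :
    x ∈ span R (range v) ↔ ∃ ξ : ι → R, x + ∑ i, v i * algebraMap R A (ξ i) = 0 := by
  have hsum (ξ : ι → R) : ∑ i, v i * algebraMap R A (ξ i) = ∑ i, ξ i • v i := by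
    simp only [Algebra.smul_def, Algebra.commutes]
  rw [mem_span_range_iff_exists_fun]
  constructor
  · rintro ⟨ξ, hξ⟩
    refine ⟨-ξ, ?_⟩
    simp only [hsum, Pi.neg_apply, neg_smul, Finset.sum_neg_distrib, hξ, add_neg_cancel]
  · rintro ⟨ξ, hξ⟩
    refine ⟨-ξ, ?_⟩
    simp only [Pi.neg_apply, neg_smul, Finset.sum_neg_distrib, ← hsum, neg_eq_iff_eq_neg]
    exact eq_neg_of_add_eq_zero_right hξ

theorem flag_space_dimension_general {C K : Type*} [Field C] [Field K] [Algebra C K]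
    (k : ℕ → K) (s : ℕ) (c : Fin s → C)
    (hrec : ∀ n, s ≤ n →
      k n = -∑ j : Fin s, k (n - 1 - (j : ℕ)) * algebraMap C K (c j))
    (hmin : ∀ m, m < s →
      ¬∃ ξ : Fin m → C,
        k m + ∑ i : Fin m, k (m - 1 - (i : ℕ)) * algebraMap C K (ξ i) = 0)
    (n : ℕ) :
    Module.finrank C
      ↥(LinearMap.ker
        (Fintype.linearCombination C (fun i : Fin n => k (n - 1 - (i : ℕ))))) =
      n - s := by
  have hnew : ∀ m < s, k m ∉ span C (range fun i : Fin m => k i) := fun m hm hmem => by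
    rw [← range_fin_rev_eq, mem_span_range_iff_exists_add_sum_mul_eq_zero] at hmem
    exact hmin m hm hmem
  have hold : ∀ m, s ≤ m → k m ∈ span C (range fun i : Fin m => k i) := by
    intro m hm
    have hmem : k m ∈ span C (range fun j : Fin s => k (m - 1 - j)) :=
      (mem_span_range_iff_exists_add_sum_mul_eq_zero _ _).2
        ⟨c, by rw [hrec m hm, neg_add_cancel]⟩
    refine span_mono ?_ hmem
    rintro _ ⟨j, rfl⟩
    exact ⟨⟨m - 1 - j, by omega⟩, rfl⟩
  have hrank := LinearMap.finrank_range_add_finrank_ker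
    (Fintype.linearCombination C (fun i : Fin n => k (n - 1 - (i : ℕ))))
  rw [Fintype.range_linearCombination, range_fin_rev_eq,
    finrank_span_range_fin_eq_min k s hnew hold, finrank_fin_fun] at hrank
  omega

/-- let `C ⊆ K` be fields and `k₀, k₁, …` elements of `K` satisfying
`k_n = -k_{n-1}c₁ - ⋯ - k_{n-s}c_s` for all `n ≥ s`, with `(c₁,…,c_s) ∈ Cˢ` fixed.
If for every `m < s` there is no `ξ ∈ Cᵐ` with `k_m + k_{m-1}ξ₁ + ⋯ + k₀ξ_m = 0`,
then for every `n > s` the `C`-vector space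
`V_n = {ξ ∈ Cⁿ : k_{n-1}ξ₁ + ⋯ + k₀ξ_n = 0}` has dimension `n - s`. -/
theorem flag_space_dimension {C K : Type*} [Field C] [Field K] [Algebra C K]
    (k : ℕ → K) (s : ℕ) (hs : 1 ≤ s) (c : Fin s → C)
    (hrec : ∀ n, s ≤ n →
      k n = -∑ j : Fin s, k (n - 1 - (j : ℕ)) * algebraMap C K (c j))
    (hmin : ∀ m, m < s →
      ¬∃ ξ : Fin m → C,
        k m + ∑ i : Fin m, k (m - 1 - (i : ℕ)) * algebraMap C K (ξ i) = 0)
    (n : ℕ) (hn : s < n) :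
    Module.finrank C
      ↥(LinearMap.ker
        (Fintype.linearCombination C (fun i : Fin n => k (n - 1 - (i : ℕ))))) =
      n - s :=
  flag_space_dimension_general k s c hrec hmin n
end

section
/- Let K(Γ) be the fraction field of K[λ,μ]/(f_s), f_s = μ² - R(λ) ∈ C[λ,μ] irreducible in K[λ,μ], with derivation ∂̃ induced from the coefficientwise derivation on K[λ,μ]. Then the field of constants of (K(Γ), ∂̃) is exactly C(Γ), the fraction field of C[λ,μ]/(f_s). -/
open Polynomial

/-- Coefficientwise extension of a map `d : K → K` to `K[λ]`. -/
noncomputable def derivPoly {K : Type*} [Field K] (d : K → K) (q : Polynomial K) :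
    Polynomial K :=
  ∑ n ∈ q.support, Polynomial.C (d (q.coeff n)) * Polynomial.X ^ n

/-- Coefficientwise extension of `d` to `K[λ,μ] = (K[λ])[μ]`. -/
noncomputable def derivPoly2 {K : Type*} [Field K] (d : K → K)
    (p : Polynomial (Polynomial K)) : Polynomial (Polynomial K) :=
  ∑ n ∈ p.support, Polynomial.C (derivPoly d (p.coeff n)) * Polynomial.X ^ n

/-! Write a constant `z` as `A / B` with `B ∈ K[λ]` monic of least degree (possible since
the norm `(q₀ + q₁μ)(q₀ - q₁μ) = q₀² - q₁²R` clears `μ` from denominators). Differentiating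
`z B = A` gives `z ∂B = ∂A`, and `∂B` has smaller degree because the leading coefficient of `B`
is `1`; by minimality `∂B = 0`. Then `∂A` vanishes in `K(Γ)`, and reducing `A` modulo the monic
`μ² - R` makes `∂A = 0` already in `K[λ,μ]`. -/

theorem leibniz_map_zero {K : Type*} [Field K] {d : K → K}
    (hmul : ∀ a b, d (a * b) = a * d b + d a * b) : d 0 = 0 := by
  simpa using hmul 0 0

theorem leibniz_map_one {K : Type*} [Field K] {d : K → K}
    (hmul : ∀ a b, d (a * b) = a * d b + d a * b) : d 1 = 0 := by
  simpa using hmul 1 1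

theorem leibniz_eq_zero_of_mul_eq {L : Type*} [Field L] {δ : L → L}
    (hδmul : ∀ x y, δ (x * y) = x * δ y + δ x * y) {z a b : L} (ha : δ a = 0) (hb : δ b = 0)
    (hb0 : b ≠ 0) (h : z * b = a) : δ z = 0 := by
  have := hδmul z b
  rw [h, ha, hb, mul_zero, zero_add] at this
  exact (mul_eq_zero.mp this.symm).resolve_right hb0

section DerivPoly

variable {K : Type*} [Field K] {d : K → K}

theorem derivPoly_coeff (hd0 : d 0 = 0) (q : K[X]) (n : ℕ) :
    (derivPoly d q).coeff n = d (q.coeff n) := by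
  simp only [derivPoly, finsetSum_coeff, coeff_C_mul, coeff_X_pow, mul_ite, mul_one, mul_zero,
    Finset.sum_ite_eq, mem_support_iff]
  split_ifs with h
  · rfl
  · rw [notMem_support_iff.mp h, hd0]

theorem derivPoly2_coeff (p : K[X][X]) (n : ℕ) :
    (derivPoly2 d p).coeff n = derivPoly d (p.coeff n) := by
  simp only [derivPoly2, finsetSum_coeff, coeff_C_mul, coeff_X_pow, mul_ite, mul_one, mul_zero,
    Finset.sum_ite_eq, mem_support_iff]
  split_ifs with h
  · rfl
  · simp [notMem_support_iff.mp h, derivPoly]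

theorem derivPoly2_eq_zero_iff (hd0 : d 0 = 0) {p : K[X][X]} :
    derivPoly2 d p = 0 ↔ ∀ i j, d ((p.coeff i).coeff j) = 0 := by
  simp only [Polynomial.ext_iff, derivPoly2_coeff, derivPoly_coeff hd0, coeff_zero]

theorem derivPoly2_C (B : K[X]) :
    derivPoly2 d (C B) = C (derivPoly d B) := by
  ext n : 1
  rw [derivPoly2_coeff, coeff_C, coeff_C]
  split_ifs
  · rfl
  · simp [derivPoly]

theorem degree_derivPoly2_le (p : K[X][X]) :
    (derivPoly2 d p).degree ≤ p.degree := by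
  refine degree_mono fun n hn ↦ ?_
  contrapose! hn
  rw [notMem_support_iff] at hn ⊢
  simp [derivPoly2_coeff, hn, derivPoly]

theorem natDegree_derivPoly_lt (hd0 : d 0 = 0) (hd1 : d 1 = 0) {B : K[X]} (hB : B.Monic)
    (h : derivPoly d B ≠ 0) : (derivPoly d B).natDegree < B.natDegree := by
  rw [natDegree_lt_iff_degree_lt h, degree_lt_iff_coeff_zero]
  intro m hm
  rw [derivPoly_coeff hd0]
  rcases hm.eq_or_lt with rfl | hlt
  · rw [hB.coeff_natDegree, hd1]
  · rw [coeff_eq_zero_of_natDegree_lt hlt, hd0]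

end DerivPoly

section Fraction

variable {K : Type*} [Field K] (L : Type*) [Field L] (f : K[X][X])
  [Algebra (K[X][X] ⧸ Ideal.span {f}) L]

noncomputable def toFrac : K[X][X] →+* L :=
  (@algebraMap _ L _ _ ‹_›).comp (Ideal.Quotient.mk (Ideal.span {f}))

variable [IsFractionRing (K[X][X] ⧸ Ideal.span {f}) L] {L f}

theorem toFrac_eq_zero_iff (p : K[X][X]) : toFrac L f p = 0 ↔ f ∣ p := by
  rw [← Ideal.mem_span_singleton, ← Ideal.Quotient.eq_zero_iff_mem, toFrac, RingHom.comp_apply]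
  exact map_eq_zero_iff _ (IsFractionRing.injective (K[X][X] ⧸ Ideal.span {f}) L)

theorem exists_mul_toFrac_eq (z : L) :
    ∃ P Q : K[X][X], toFrac L f Q ≠ 0 ∧ z * toFrac L f Q = toFrac L f P := by
  obtain ⟨x, y, hy, rfl⟩ := IsFractionRing.div_surjective (K[X][X] ⧸ Ideal.span {f}) z
  obtain ⟨P, rfl⟩ := Ideal.Quotient.mk_surjective x
  obtain ⟨Q, rfl⟩ := Ideal.Quotient.mk_surjective y
  have hQ : toFrac L f Q ≠ 0 := (IsLocalization.map_units L (⟨_, hy⟩ : nonZeroDivisors _)).ne_zero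
  exact ⟨P, Q, hQ, div_mul_cancel₀ _ hQ⟩

end Fraction

section Kernel

variable {K : Type*} [Field K] {L : Type*} [Field L] {f : K[X][X]} {φ : K[X][X] →+* L}

theorem map_modByMonic_of_ker (hker : ∀ p, φ p = 0 ↔ f ∣ p) (p : K[X][X]) :
    φ (p %ₘ f) = φ p := by
  conv_rhs => rw [← modByMonic_add_div p f]
  rw [map_add, map_mul, (hker f).mpr dvd_rfl, zero_mul, add_zero]

theorem eq_zero_of_map_eq_zero_of_ker (hker : ∀ p, φ p = 0 ↔ f ∣ p) {p : K[X][X]} (h : φ p = 0)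
    (hp : p.degree < f.degree) : p = 0 :=
  eq_zero_of_dvd_of_degree_lt ((hker p).mp h) hp

theorem map_C_ne_zero_of_ker (hker : ∀ p, φ p = 0 ↔ f ∣ p) (hf : 0 < f.degree) {B : K[X]}
    (hB : B ≠ 0) : φ (C B) ≠ 0 :=
  fun h ↦ hB <| C_eq_zero.mp <| eq_zero_of_map_eq_zero_of_ker hker h <| degree_C_le.trans_lt hf

theorem exists_monic_denom_of_mul_map_C_eq {z : L} {A : K[X][X]} {B : K[X]} (hB : B ≠ 0)
    (h : z * φ (C B) = φ A) :
    ∃ (A' : K[X][X]) (B' : K[X]), B'.Monic ∧ B'.natDegree = B.natDegree ∧ z * φ (C B') = φ A' := by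
  refine ⟨A * C (C B.leadingCoeff⁻¹), B * C B.leadingCoeff⁻¹, monic_mul_leadingCoeff_inv hB,
    natDegree_mul_leadingCoeff_inv B hB, ?_⟩
  rw [C_mul, map_mul, map_mul, ← mul_assoc, h]

end Kernel

section Hyperelliptic

variable {K : Type*} [Field K] {L : Type*} [Field L] {φ : K[X][X] →+* L}

theorem mul_conj_eq (R q₀ q₁ : K[X]) :
    (C q₁ * X + C q₀) * (C q₀ - C q₁ * X) =
      C (q₀ ^ 2 - q₁ ^ 2 * R) - C (q₁ ^ 2) * (X ^ 2 - C R) := by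
  simp only [map_sub, map_mul, map_pow]
  ring

theorem exists_C_denom_of_mul_map_eq {R : K[X]} (hker : ∀ p, φ p = 0 ↔ X ^ 2 - C R ∣ p) {z : L}
    {P Q : K[X][X]} (hQ : φ Q ≠ 0) (h : z * φ Q = φ P) :
    ∃ (A : K[X][X]) (B : K[X]), B ≠ 0 ∧ z * φ (C B) = φ A := by
  have hf : (X ^ 2 - C R).degree = 2 := degree_X_pow_sub_C two_pos R
  have hlt : (Q %ₘ (X ^ 2 - C R)).degree < 2 :=
    (degree_modByMonic_lt Q (monic_X_pow_sub_C R two_ne_zero)).trans_eq hf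
  obtain ⟨q₀, q₁, hQ₀⟩ : ∃ q₀ q₁ : K[X], Q %ₘ (X ^ 2 - C R) = C q₁ * X + C q₀ :=
    ⟨_, _, eq_X_add_C_of_degree_le_one (Order.le_of_lt_succ hlt)⟩
  rw [← map_modByMonic_of_ker hker, hQ₀] at hQ h
  have hnorm : φ (C q₁ * X + C q₀) * φ (C q₀ - C q₁ * X) = φ (C (q₀ ^ 2 - q₁ ^ 2 * R)) := by
    rw [← map_mul, mul_conj_eq, map_sub, map_mul, (hker _).mpr dvd_rfl, mul_zero, sub_zero]
  have hconj : φ (C q₀ - C q₁ * X) ≠ 0 := by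
    intro h0
    have hc := eq_zero_of_map_eq_zero_of_ker hker h0 (by rw [hf]; compute_degree!)
    have h₀ : q₀ = 0 := by simpa using congrArg (coeff · 0) hc
    have h₁ : q₁ = 0 := by simpa using congrArg (coeff · 1) hc
    exact hQ (by simp [h₀, h₁])
  refine ⟨P * (C q₀ - C q₁ * X), q₀ ^ 2 - q₁ ^ 2 * R, fun hN ↦ mul_ne_zero hQ hconj ?_, ?_⟩
  · rw [hnorm, hN, C_0, map_zero]
  · rw [← hnorm, ← mul_assoc, h, map_mul]

end Hyperelliptic

section Constants

variable {K : Type*} [Field K] {d : K → K} {L : Type*} [Field L] {φ : K[X][X] →+* L}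
  {δ : L → L}

theorem mul_map_C_derivPoly_eq
    (hδmul : ∀ x y, δ (x * y) = x * δ y + δ x * y)
    (hδext : ∀ p, δ (φ p) = φ (derivPoly2 d p))
    {z : L} (hz : δ z = 0) {A : K[X][X]} {B : K[X]} (h : z * φ (C B) = φ A) :
    z * φ (C (derivPoly d B)) = φ (derivPoly2 d A) := by
  have := congrArg δ h
  rwa [hδmul, hz, zero_mul, add_zero, hδext, hδext, derivPoly2_C] at this

theorem exists_constant_C_denom_of_monic (hd0 : d 0 = 0) (hd1 : d 1 = 0)
    (hδmul : ∀ x y, δ (x * y) = x * δ y + δ x * y)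
    (hδext : ∀ p, δ (φ p) = φ (derivPoly2 d p))
    {z : L} (hz : δ z = 0) (n : ℕ) {A : K[X][X]} {B : K[X]} (hB : B.Monic)
    (hn : B.natDegree = n) (h : z * φ (C B) = φ A) :
    ∃ (A' : K[X][X]) (B' : K[X]), B' ≠ 0 ∧ derivPoly d B' = 0 ∧ z * φ (C B') = φ A' := by
  induction n using Nat.strong_induction_on generalizing A B with
  | _ n ih =>
    by_cases hB' : derivPoly d B = 0
    · exact ⟨A, B, hB.ne_zero, hB', h⟩
    obtain ⟨A₁, B₁, hB₁, hn₁, h₁⟩ :=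
      exists_monic_denom_of_mul_map_C_eq hB' (mul_map_C_derivPoly_eq hδmul hδext hz h)
    exact ih _ (hn ▸ hn₁ ▸ natDegree_derivPoly_lt hd0 hd1 hB hB') hB₁ rfl h₁

theorem exists_constant_fraction {f : K[X][X]} (hf : f.Monic) (hf0 : 0 < f.degree)
    (hker : ∀ p, φ p = 0 ↔ f ∣ p) (hd0 : d 0 = 0) (hd1 : d 1 = 0)
    (hδmul : ∀ x y, δ (x * y) = x * δ y + δ x * y)
    (hδext : ∀ p, δ (φ p) = φ (derivPoly2 d p))
    {z : L} (hz : δ z = 0) {A : K[X][X]} {B : K[X]} (hB : B ≠ 0) (h : z * φ (C B) = φ A) :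
    ∃ a b : K[X][X], derivPoly2 d a = 0 ∧ derivPoly2 d b = 0 ∧ φ b ≠ 0 ∧ z * φ b = φ a := by
  obtain ⟨A₁, B₁, hB₁, -, h₁⟩ := exists_monic_denom_of_mul_map_C_eq hB h
  obtain ⟨A₂, B₂, hB₂, hB₂', h₂⟩ :=
    exists_constant_C_denom_of_monic hd0 hd1 hδmul hδext hz _ hB₁ rfl h₁
  rw [← map_modByMonic_of_ker hker A₂] at h₂
  have hA : φ (derivPoly2 d (A₂ %ₘ f)) = 0 := by
    rw [← mul_map_C_derivPoly_eq hδmul hδext hz h₂, hB₂', C_0, map_zero, mul_zero]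
  refine ⟨A₂ %ₘ f, C B₂, eq_zero_of_map_eq_zero_of_ker hker hA ?_,
    by rw [derivPoly2_C, hB₂', C_0], map_C_ne_zero_of_ker hker hf0 hB₂, h₂⟩
  exact (degree_derivPoly2_le _).trans_lt (degree_modByMonic_lt _ hf)

end Constants

theorem constants_of_spectral_function_field_general {K : Type*} [Field K] (d : K → K)
    (hmul : ∀ a b, d (a * b) = a * d b + d a * b)
    (R : Polynomial K)
    (L : Type) [Field L]
    [Algebra (Polynomial (Polynomial K) ⧸
        Ideal.span {(Polynomial.X : Polynomial (Polynomial K)) ^ 2 - Polynomial.C R}) L]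
    [IsFractionRing (Polynomial (Polynomial K) ⧸
        Ideal.span {(Polynomial.X : Polynomial (Polynomial K)) ^ 2 - Polynomial.C R}) L]
    (δ : L → L)
    (hδmul : ∀ x y, δ (x * y) = x * δ y + δ x * y)
    (hδext : ∀ p : Polynomial (Polynomial K),
      δ (@algebraMap _ L _ _ ‹_› (Ideal.Quotient.mk
            (Ideal.span {(Polynomial.X : Polynomial (Polynomial K)) ^ 2 - Polynomial.C R}) p)) =
        @algebraMap _ L _ _ ‹_› (Ideal.Quotient.mk
            (Ideal.span {(Polynomial.X : Polynomial (Polynomial K)) ^ 2 - Polynomial.C R})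
            (derivPoly2 d p))) :
    ∀ z : L, δ z = 0 ↔
      ∃ a b : Polynomial (Polynomial K),
        (∀ i j, d ((a.coeff i).coeff j) = 0) ∧ (∀ i j, d ((b.coeff i).coeff j) = 0) ∧
        @algebraMap _ L _ _ ‹_› (Ideal.Quotient.mk
            (Ideal.span {(Polynomial.X : Polynomial (Polynomial K)) ^ 2 - Polynomial.C R}) b) ≠ 0 ∧
        z * @algebraMap _ L _ _ ‹_› (Ideal.Quotient.mk
            (Ideal.span {(Polynomial.X : Polynomial (Polynomial K)) ^ 2 - Polynomial.C R}) b) =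
          @algebraMap _ L _ _ ‹_› (Ideal.Quotient.mk
            (Ideal.span {(Polynomial.X : Polynomial (Polynomial K)) ^ 2 - Polynomial.C R}) a) := by
  intro z
  have hd0 := leibniz_map_zero hmul
  have hker := toFrac_eq_zero_iff (L := L) (f := X ^ 2 - C R)
  have hδext' : ∀ p, δ (toFrac L (X ^ 2 - C R) p) = toFrac L _ (derivPoly2 d p) := hδext
  constructor
  · intro hz
    obtain ⟨P, Q, hQ, h⟩ := exists_mul_toFrac_eq (f := X ^ 2 - C R) z
    obtain ⟨A, B, hB, h⟩ := exists_C_denom_of_mul_map_eq hker hQ h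
    obtain ⟨a, b, ha, hb, hb0, hab⟩ := exists_constant_fraction
      (monic_X_pow_sub_C R two_ne_zero) (by rw [degree_X_pow_sub_C two_pos]; decide)
      hker hd0 (leibniz_map_one hmul) hδmul hδext' hz hB h
    exact ⟨a, b, (derivPoly2_eq_zero_iff hd0).mp ha, (derivPoly2_eq_zero_iff hd0).mp hb, hb0, hab⟩
  · rintro ⟨a, b, ha, hb, hb0, h⟩
    have hδ : ∀ p, (∀ i j, d ((p.coeff i).coeff j) = 0) → δ (toFrac L (X ^ 2 - C R) p) = 0 :=
      fun p hp ↦ by rw [hδext', (derivPoly2_eq_zero_iff hd0).mpr hp, map_zero]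
    exact leibniz_eq_zero_of_mul_eq hδmul (hδ a ha) (hδ b hb) hb0 h

/-- let `f = μ² - R(λ)` with `R ∈ C[λ]`, irreducible in `K[λ,μ]`, and
let `K(Γ)` be the fraction field of `K[λ,μ]/(f)` with the derivation `∂̃` induced by
the coefficientwise derivation.  Then the field of constants of `(K(Γ), ∂̃)` is
exactly `C(Γ)`, the fraction field of `C[λ,μ]/(f)`: an element `z` is a constant iff
`z = a/b` for some `a, b ∈ C[λ,μ]` with `b ∉ (f)`. -/
theorem constants_of_spectral_function_field {K : Type*} [Field K] (d : K → K)
    (hadd : ∀ a b, d (a + b) = d a + d b)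
    (hmul : ∀ a b, d (a * b) = a * d b + d a * b)
    (R : Polynomial K) (hR : ∀ n, d (R.coeff n) = 0)
    (hirr : Irreducible ((Polynomial.X : Polynomial (Polynomial K)) ^ 2 - Polynomial.C R))
    (L : Type) [Field L]
    [Algebra (Polynomial (Polynomial K) ⧸
        Ideal.span {(Polynomial.X : Polynomial (Polynomial K)) ^ 2 - Polynomial.C R}) L]
    [IsFractionRing (Polynomial (Polynomial K) ⧸
        Ideal.span {(Polynomial.X : Polynomial (Polynomial K)) ^ 2 - Polynomial.C R}) L]
    (δ : L → L)
    (hδadd : ∀ x y, δ (x + y) = δ x + δ y)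
    (hδmul : ∀ x y, δ (x * y) = x * δ y + δ x * y)
    (hδext : ∀ p : Polynomial (Polynomial K),
      δ (@algebraMap _ L _ _ ‹_› (Ideal.Quotient.mk
            (Ideal.span {(Polynomial.X : Polynomial (Polynomial K)) ^ 2 - Polynomial.C R}) p)) =
        @algebraMap _ L _ _ ‹_› (Ideal.Quotient.mk
            (Ideal.span {(Polynomial.X : Polynomial (Polynomial K)) ^ 2 - Polynomial.C R})
            (derivPoly2 d p))) :
    ∀ z : L, δ z = 0 ↔
      ∃ a b : Polynomial (Polynomial K),
        (∀ i j, d ((a.coeff i).coeff j) = 0) ∧ (∀ i j, d ((b.coeff i).coeff j) = 0) ∧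
        @algebraMap _ L _ _ ‹_› (Ideal.Quotient.mk
            (Ideal.span {(Polynomial.X : Polynomial (Polynomial K)) ^ 2 - Polynomial.C R}) b) ≠ 0 ∧
        z * @algebraMap _ L _ _ ‹_› (Ideal.Quotient.mk
            (Ideal.span {(Polynomial.X : Polynomial (Polynomial K)) ^ 2 - Polynomial.C R}) b) =
          @algebraMap _ L _ _ ‹_› (Ideal.Quotient.mk
            (Ideal.span {(Polynomial.X : Polynomial (Polynomial K)) ^ 2 - Polynomial.C R}) a) :=
  constants_of_spectral_function_field_general d hmul R L δ hδmul hδext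
end

section
/- Let R be a commutative differential ring and L = -∂² + u ∈ R[∂]. Define the recursion v_0 = 1 and operators P_1 = ∂, P_{2n+1} = v_n∂ - (1/2)∂(v_n) + P_{2n-1}L for a sequence v_n ∈ R. If [P_{2n+1}, L] = 2∂(v_{n+1}) (as multiplication operators) where v_{n+1} satisfies -4∂(v_{n+1}) = ∂³(v_n) - 4u∂(v_n) - 2∂(u)v_n, then by induction [P_{2n+3}, L] = 2∂(v_{n+2}) where -4∂(v_{n+2}) = ∂³(v_{n+1}) - 4u∂(v_{n+1}) - 2∂(u)v_{n+1}. Base case: [P_1, L] = ∂(u) = 2∂(v_1) with v_1 = u/2. -/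
/-- Lax representation of the KdV hierarchy, inductive step and base
case.  Differential operators are represented by their action on a differential
module `(M, D)` over the differential ring `(R, d)`.  With `L = -∂² + u`, if
`P = P_{2n+1}` satisfies `[P, L] = 2∂(v_{n+1})` (multiplication operator) and
`-4∂(v_{n+2}) = ∂³(v_{n+1}) - 4u∂(v_{n+1}) - 2∂(u)v_{n+1}`, then
`P_{2n+3} = v_{n+1}∂ - (1/2)∂(v_{n+1}) + P·L` satisfies
`[P_{2n+3}, L] = 2∂(v_{n+2})`.  Base case: `[∂, L] = ∂(u)` (` = 2∂(v₁)` with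
`v₁ = u/2`). -/
theorem kdv_lax_pair_inductive_step {R : Type*} [CommRing R] [Invertible (2 : R)]
    (d : R → R)
    (hadd : ∀ a b, d (a + b) = d a + d b)
    (hmul : ∀ a b, d (a * b) = a * d b + d a * b)
    {M : Type*} [AddCommGroup M] [Module R M] (D : M → M)
    (hDadd : ∀ x y, D (x + y) = D x + D y)
    (hDleib : ∀ (r : R) (m : M), D (r • m) = d r • m + r • D m)
    (u : R) (L : M → M) (hL : ∀ m, L m = -(D (D m)) + u • m)
    (v w : R) (P : M → M)
    (hP : ∀ m, P (L m) - L (P m) = (2 * d v) • m)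
    (hw : -(4 * d w) = d (d (d v)) - 4 * u * d v - 2 * d u * v) :
    (∀ m, (v • D (L m) - (⅟(2 : R) * d v) • L m + P (L (L m))) -
        L (v • D m - (⅟(2 : R) * d v) • m + P (L m)) = (2 * d w) • m) ∧
    (∀ m, D (L m) - L (D m) = d u • m) := by
  have hD0 : D 0 = 0 := by
    have h := hDadd 0 0
    rw [add_zero] at h
    exact (left_eq_add.mp h)
  have hDneg : ∀ x, D (-x) = -(D x) := by
    intro x
    have h := hDadd x (-x)
    rw [add_neg_cancel, hD0] at h
    exact eq_neg_of_add_eq_zero_right h.symm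
  have hDsub : ∀ x y, D (x - y) = D x - D y := by
    intro x y
    rw [sub_eq_add_neg, hDadd, hDneg, sub_eq_add_neg]
  have hd0 : d 0 = 0 := by
    have h := hadd 0 0
    rw [add_zero] at h
    exact (left_eq_add.mp h)
  have hd1 : d 1 = 0 := by
    have h := hmul 1 1
    rw [mul_one, one_mul] at h
    linear_combination -h
  have hdi : d (⅟(2 : R)) = 0 := by
    have h2 : d (2 : R) = 0 := by
      have h := hadd 1 1
      rw [hd1] at h
      norm_num at h
      simpa using h
    have h := hmul 2 (⅟(2 : R))
    rw [mul_invOf_self, hd1, h2] at h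
    calc d (⅟(2:R)) = ⅟(2:R) * (2 * d (⅟(2:R))) := by
          rw [← mul_assoc, invOf_mul_self, one_mul]
      _ = 0 := by linear_combination (-(⅟(2:R))) * h
  have hk : (⅟(2:R)) * 2 = 1 := invOf_mul_self 2
  constructor
  · intro m
    have key : P (L (L m)) = (2 * d v) • L m + L (P (L m)) := by
      have h := hP (L m); rw [sub_eq_iff_eq_add] at h; exact h
    rw [key]
    simp only [hL, hDadd, hDleib, hDneg, hDsub, smul_add, smul_neg, smul_smul,
      hmul, hadd, hdi, hd0, smul_sub]
    match_scalars
    any_goals ring1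
    · linear_combination ⅟(2:R) * hw + (-(v * d u) - 2 * u * d v + 2 * d w) * hk
    · linear_combination (-(d (d v))) * hk
  · intro m
    simp only [hL, hDadd, hDleib, hDneg, smul_add, smul_neg]
    abel
end
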